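/- In the Frank algebra F(n), the triple brackets recover the J-ternary triple product: for all f, g, h ∈ O(1;n), [[u ⊗ f, v ⊗ g], u ⊗ h] = u ⊗ (g·f·∂(h) − h·g·∂(f)) = u ⊗ L_{f,g}h, and [[v ⊗ f, u ⊗ g], v ⊗ h] = −v ⊗ L_{f,g}h, where u, v is the chosen symplectic basis of U with λ(u,v) = 1. -/

import Mathlib

/-- The product of the divided power algebra `O(1;n)`, written in coordinates with
respect to the basis `e_0, …, e_{3^n - 1}`: it is the bilinear product determined by
`e_i · e_j = binom(i+j, i) e_{i+j}`, where `e_k = 0` for `k ≥ 3^n`. -/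
def omul (Φ : Type*) [Field Φ] (n : ℕ) (f g : Fin (3 ^ n) → Φ) : Fin (3 ^ n) → Φ :=
  fun k => ∑ i : Fin (3 ^ n), ∑ j : Fin (3 ^ n),
    if (i : ℕ) + (j : ℕ) = (k : ℕ)
    then (((i : ℕ) + (j : ℕ)).choose (i : ℕ) : Φ) * f i * g j
    else 0

/-- The basis element `e_i` of `O(1;n)`. -/
def eb (Φ : Type*) [Field Φ] (n : ℕ) (i : Fin (3 ^ n)) : Fin (3 ^ n) → Φ :=
  Pi.single i 1

/-- The linear map `∂` on `O(1;n)`, with `∂ e_0 = 0` and `∂ e_i = e_{i-1}`;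
in coordinates, `(∂ f)_k = f_{k+1}` (interpreted as `0` when `k + 1 ≥ 3^n`). -/
def odel (Φ : Type*) [Field Φ] (n : ℕ) (f : Fin (3 ^ n) → Φ) : Fin (3 ^ n) → Φ :=
  fun k => if h : (k : ℕ) + 1 < 3 ^ n then f ⟨(k : ℕ) + 1, h⟩ else 0

/-- The triple product `L_{f,g}h = f·g·∂(h) − h·g·∂(f)` on `O(1;n)`. -/
def Lt (Φ : Type*) [Field Φ] (n : ℕ) (f g h : Fin (3 ^ n) → Φ) : Fin (3 ^ n) → Φ :=
  omul Φ n (omul Φ n f g) (odel Φ n h) - omul Φ n (omul Φ n h g) (odel Φ n f)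

/-- The Frank algebra `F(n) = (U ⊗ O) ⊕ (sl(U) ⊗ O) ⊕ (Φ·Id_U ⊗ O)` in coordinates:
an element is `u⊗p + v⊗q + H⊗a + E⊗b + F⊗c + Id⊗w`, where `u, v` is the symplectic
basis of `U` (`λ(u,v) = 1`) and `H = diag(1,−1)`, `E` (`Ev = u, Eu = 0`),
`F` (`Fu = v, Fv = 0`) is the standard basis of `sl(U)` in the basis `u, v`. -/
structure Frank (Φ : Type*) [Field Φ] (n : ℕ) where
  p : Fin (3 ^ n) → Φ
  q : Fin (3 ^ n) → Φ
  a : Fin (3 ^ n) → Φ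
  b : Fin (3 ^ n) → Φ
  c : Fin (3 ^ n) → Φ
  w : Fin (3 ^ n) → Φ

/-- The bracket of the Frank algebra `F(n)`, obtained by bilinear extension of the
rules `[Id⊗f, Id⊗g] = Id⊗(f∂g − g∂f)`; `[Id⊗f, A⊗g] = A⊗(f∂g)` for `A ∈ sl(U)`;
`[A⊗f, B⊗g] = [A,B]⊗(fg)`; `[Id⊗f, w⊗g] = w⊗(f∂g + ∂(f)g)` for `w ∈ U`;
`[A⊗f, w⊗g] = A(w)⊗(fg)`; and
`[w⊗f, w'⊗g] = φ(w,w')⊗(f∂g − g∂f) + λ(w,w')·Id⊗(fg)`, where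
`φ(w,w')(w'') = λ(w,w'')w' + λ(w',w'')w` (so `φ(u,u) = 2E`, `φ(u,v) = −H`,
`φ(v,v) = −2F`), written out in the coordinates of `Frank`. -/
def fbra (Φ : Type*) [Field Φ] (n : ℕ) (X Y : Frank Φ n) : Frank Φ n where
  p := omul Φ n X.w (odel Φ n Y.p) - omul Φ n Y.w (odel Φ n X.p)
      + omul Φ n (odel Φ n X.w) Y.p - omul Φ n (odel Φ n Y.w) X.p
      + omul Φ n X.a Y.p - omul Φ n Y.a X.p
      + omul Φ n X.b Y.q - omul Φ n Y.b X.q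
  q := omul Φ n X.w (odel Φ n Y.q) - omul Φ n Y.w (odel Φ n X.q)
      + omul Φ n (odel Φ n X.w) Y.q - omul Φ n (odel Φ n Y.w) X.q
      - omul Φ n X.a Y.q + omul Φ n Y.a X.q
      + omul Φ n X.c Y.p - omul Φ n Y.c X.p
  a := omul Φ n X.w (odel Φ n Y.a) - omul Φ n Y.w (odel Φ n X.a)
      + omul Φ n X.b Y.c - omul Φ n X.c Y.b
      - (omul Φ n X.p (odel Φ n Y.q) - omul Φ n Y.q (odel Φ n X.p))
      - (omul Φ n X.q (odel Φ n Y.p) - omul Φ n Y.p (odel Φ n X.q))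
  b := omul Φ n X.w (odel Φ n Y.b) - omul Φ n Y.w (odel Φ n X.b)
      + (2 : Φ) • (omul Φ n X.a Y.b - omul Φ n X.b Y.a)
      + (2 : Φ) • (omul Φ n X.p (odel Φ n Y.p) - omul Φ n Y.p (odel Φ n X.p))
  c := omul Φ n X.w (odel Φ n Y.c) - omul Φ n Y.w (odel Φ n X.c)
      + (2 : Φ) • (omul Φ n X.c Y.a - omul Φ n X.a Y.c)
      - (2 : Φ) • (omul Φ n X.q (odel Φ n Y.q) - omul Φ n Y.q (odel Φ n X.q))
  w := omul Φ n X.w (odel Φ n Y.w) - omul Φ n Y.w (odel Φ n X.w)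
      + omul Φ n X.p Y.q - omul Φ n X.q Y.p

/-- The element `u ⊗ f` of the Frank algebra. -/
def uT (Φ : Type*) [Field Φ] (n : ℕ) (f : Fin (3 ^ n) → Φ) : Frank Φ n :=
  ⟨f, 0, 0, 0, 0, 0⟩

/-- The element `v ⊗ g` of the Frank algebra. -/
def vT (Φ : Type*) [Field Φ] (n : ℕ) (g : Fin (3 ^ n) → Φ) : Frank Φ n :=
  ⟨0, g, 0, 0, 0, 0⟩

/-! In coordinates, `O(1;n)` is the truncation to degrees `< 3^n` of the Hurwitz product
`(F·G)_k = ∑_{i+j=k} C(k,i) F_i G_j` on sequences, for which `∂` is the shift. The Hurwitz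
product is commutative and associative and the shift is a derivation of it; the Leibniz rule
survives the truncation because `C(3^n, i) ≡ 0 mod 3` for `0 < i < 3^n`. Expanding the brackets,
the `u`-coefficient of `[[u⊗f, v⊗g], u⊗h]` is `fg∂h + ∂(fg)h + (g∂f − f∂g)h = fg∂h + 2gh∂f`,
which is `L_{f,g}h` since `3 = 0`; the `v`-case is the same computation up to sign. -/

open Finset

theorem sum_antidiagonal_antidiagonal_fst {M : Type*} [AddCommMonoid M] (f : ℕ → ℕ → ℕ → M)
    (k : ℕ) :
    ∑ p ∈ antidiagonal k, ∑ q ∈ antidiagonal p.1, f q.1 q.2 p.2 =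
      ∑ p ∈ antidiagonal k, ∑ q ∈ antidiagonal p.2, f p.1 q.1 q.2 := by
  simp only [sum_sigma']
  apply sum_nbij' (fun x ↦ ⟨(x.2.1, x.2.2 + x.1.2), (x.2.2, x.1.2)⟩)
    (fun y ↦ ⟨(y.1.1 + y.2.1, y.2.2), (y.1.1, y.2.1)⟩) <;> aesop (add simp [add_assoc])

section Hurwitz

variable {R : Type*} [CommSemiring R]

def hurwitzMul (F G : ℕ → R) : ℕ → R :=
  fun k ↦ ∑ p ∈ antidiagonal k, (k.choose p.1 : R) * F p.1 * G p.2

def hurwitzDeriv (F : ℕ → R) : ℕ → R := fun k ↦ F (k + 1)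

theorem hurwitzMul_comm (F G : ℕ → R) : hurwitzMul F G = hurwitzMul G F := by
  funext k
  rw [hurwitzMul, hurwitzMul, ← Nat.sum_antidiagonal_swap]
  refine sum_congr rfl fun p hp ↦ ?_
  rw [Prod.fst_swap, Prod.snd_swap, Nat.choose_symm_of_eq_add (mem_antidiagonal.mp hp).symm]
  ring

theorem hurwitzMul_assoc (F G H : ℕ → R) :
    hurwitzMul (hurwitzMul F G) H = hurwitzMul F (hurwitzMul G H) := by
  funext k
  let T a b c : R := ((k.choose (a + b) * (a + b).choose a : ℕ) : R) * F a * G b * H c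
  calc hurwitzMul (hurwitzMul F G) H k
      = ∑ p ∈ antidiagonal k, ∑ q ∈ antidiagonal p.1, T q.1 q.2 p.2 := by
        refine sum_congr rfl fun p _ ↦ ?_
        rw [hurwitzMul, mul_sum, sum_mul]
        refine sum_congr rfl fun q hq ↦ ?_
        rw [← mem_antidiagonal.mp hq]
        simp only [T]
        push_cast
        ring
    _ = ∑ p ∈ antidiagonal k, ∑ q ∈ antidiagonal p.2, T p.1 q.1 q.2 :=
        sum_antidiagonal_antidiagonal_fst T k
    _ = hurwitzMul F (hurwitzMul G H) k := by
        refine sum_congr rfl fun p hp ↦ ?_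
        rw [hurwitzMul, mul_sum]
        refine sum_congr rfl fun q hq ↦ ?_
        have hk : k - p.1 = p.2 := by rw [← mem_antidiagonal.mp hp, Nat.add_sub_cancel_left]
        simp only [T, Nat.choose_mul (Nat.le_add_right p.1 q.1), hk, Nat.add_sub_cancel_left,
          ← mem_antidiagonal.mp hq]
        push_cast
        ring

theorem hurwitzDeriv_hurwitzMul (F G : ℕ → R) :
    hurwitzDeriv (hurwitzMul F G) =
      hurwitzMul (hurwitzDeriv F) G + hurwitzMul F (hurwitzDeriv G) := by
  funext k
  have hG : hurwitzMul F (hurwitzDeriv G) k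
      = ∑ p ∈ antidiagonal (k + 1), (k.choose p.1 : R) * F p.1 * G p.2 := by
    rw [Nat.sum_antidiagonal_succ', Nat.choose_succ_self]
    simp [hurwitzMul, hurwitzDeriv]
  rw [Pi.add_apply, hG, hurwitzDeriv, hurwitzMul, Nat.sum_antidiagonal_succ,
    Nat.sum_antidiagonal_succ]
  simp only [hurwitzMul, hurwitzDeriv, Nat.choose_succ_succ', Nat.cast_add, add_mul,
    sum_add_distrib, Nat.choose_zero_right]
  ring

theorem hurwitzMul_congr {F F' G G' : ℕ → R} {k : ℕ} (hF : ∀ m ≤ k, F m = F' m)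
    (hG : ∀ m ≤ k, G m = G' m) : hurwitzMul F G k = hurwitzMul F' G' k := by
  refine sum_congr rfl fun p hp ↦ ?_
  have := mem_antidiagonal.mp hp
  rw [hF p.1 (by omega), hG p.2 (by omega)]

theorem hurwitzMul_prime_pow_eq_zero {p : ℕ} (hp : p.Prime) [CharP R p] {F G : ℕ → R} (n : ℕ)
    (hF : F (p ^ n) = 0) (hG : G (p ^ n) = 0) : hurwitzMul F G (p ^ n) = 0 := by
  refine sum_eq_zero fun q hq ↦ ?_
  have hq' := mem_antidiagonal.mp hq
  by_cases h0 : q.1 = 0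
  · simp [show q.2 = p ^ n by omega, hG]
  by_cases h1 : q.1 = p ^ n
  · simp [h1, hF]
  · simp [(CharP.cast_eq_zero_iff R p _).mpr (hp.dvd_choose_pow h0 h1)]

end Hurwitz

section DividedPower

variable {Φ : Type*} [Field Φ] {n : ℕ}

def extendZero (n : ℕ) (f : Fin (3 ^ n) → Φ) : ℕ → Φ :=
  fun m ↦ if h : m < 3 ^ n then f ⟨m, h⟩ else 0

theorem omul_apply (f g : Fin (3 ^ n) → Φ) (k : Fin (3 ^ n)) :
    omul Φ n f g k = hurwitzMul (extendZero n f) (extendZero n g) (k : ℕ) := by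
  let T (i j : ℕ) : Φ := ((i + j).choose i : Φ) * extendZero n f i * extendZero n g j
  have hfilter : {p ∈ range (3 ^ n) ×ˢ range (3 ^ n) | p.1 + p.2 = (k : ℕ)} =
      antidiagonal (k : ℕ) := by
    ext ⟨i, j⟩
    simp only [mem_filter, mem_product, mem_range, HasAntidiagonal.mem_antidiagonal]
    have := k.isLt
    omega
  calc omul Φ n f g k
      = ∑ i ∈ range (3 ^ n), ∑ j ∈ range (3 ^ n), if i + j = k then T i j else 0 := by
        simp only [omul, ← Fin.sum_univ_eq_sum_range]
        simp [T, extendZero]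
    _ = ∑ p ∈ antidiagonal (k : ℕ), T p.1 p.2 := by
        rw [← hfilter, sum_filter, sum_product]
    _ = hurwitzMul (extendZero n f) (extendZero n g) (k : ℕ) := by
        refine sum_congr rfl fun p hp ↦ ?_
        rw [← mem_antidiagonal.mp hp]

theorem extendZero_omul (f g : Fin (3 ^ n) → Φ) {m : ℕ} (hm : m < 3 ^ n) :
    extendZero n (omul Φ n f g) m = hurwitzMul (extendZero n f) (extendZero n g) m := by
  rw [extendZero, dif_pos hm, omul_apply]

theorem extendZero_odel (f : Fin (3 ^ n) → Φ) :
    extendZero n (odel Φ n f) = hurwitzDeriv (extendZero n f) := by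
  funext m
  by_cases hm : m + 1 < 3 ^ n
  · simp [extendZero, odel, hurwitzDeriv, hm, show m < 3 ^ n by omega]
  · simp [extendZero, odel, hurwitzDeriv, hm]

theorem omul_comm (f g : Fin (3 ^ n) → Φ) : omul Φ n f g = omul Φ n g f := by
  funext k
  rw [omul_apply, omul_apply, hurwitzMul_comm]

theorem omul_assoc (f g h : Fin (3 ^ n) → Φ) :
    omul Φ n (omul Φ n f g) h = omul Φ n f (omul Φ n g h) := by
  funext k
  have hk (m : ℕ) (hm : m ≤ k) : m < 3 ^ n := hm.trans_lt k.isLt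
  rw [omul_apply, omul_apply,
    hurwitzMul_congr (fun m hm ↦ extendZero_omul f g (hk m hm)) fun _ _ ↦ rfl,
    hurwitzMul_congr (fun _ _ ↦ rfl) fun m hm ↦ extendZero_omul g h (hk m hm), hurwitzMul_assoc]

theorem odel_omul [CharP Φ 3] (f g : Fin (3 ^ n) → Φ) :
    odel Φ n (omul Φ n f g) = omul Φ n (odel Φ n f) g + omul Φ n f (odel Φ n g) := by
  funext k
  rw [Pi.add_apply, omul_apply, omul_apply, extendZero_odel, extendZero_odel,
    ← Pi.add_apply, ← hurwitzDeriv_hurwitzMul, hurwitzDeriv, odel]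
  split_ifs with hk
  · exact omul_apply f g ⟨k + 1, hk⟩
  · rw [show (k : ℕ) + 1 = 3 ^ n by omega, hurwitzMul_prime_pow_eq_zero Nat.prime_three] <;>
      simp [extendZero]

theorem omul_zero_left (f : Fin (3 ^ n) → Φ) : omul Φ n 0 f = 0 := by
  funext k; simp [omul]

theorem omul_zero_right (f : Fin (3 ^ n) → Φ) : omul Φ n f 0 = 0 := by
  funext k; simp [omul]

theorem odel_zero : odel Φ n (0 : Fin (3 ^ n) → Φ) = 0 := by
  funext k; simp [odel]

theorem odel_neg (f : Fin (3 ^ n) → Φ) : odel Φ n (-f) = -odel Φ n f := by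
  funext k
  simp only [odel, Pi.neg_apply]
  split_ifs <;> simp

theorem omul_add_left (f g h : Fin (3 ^ n) → Φ) :
    omul Φ n (f + g) h = omul Φ n f h + omul Φ n g h := by
  funext k; simp [omul, ← sum_add_distrib, ite_add_ite, add_mul, mul_add]

theorem omul_sub_left (f g h : Fin (3 ^ n) → Φ) :
    omul Φ n (f - g) h = omul Φ n f h - omul Φ n g h := by
  funext k; simp [omul, ← sum_sub_distrib, ite_sub_ite, sub_mul, mul_sub]

theorem omul_neg_left (f g : Fin (3 ^ n) → Φ) : omul Φ n (-f) g = -omul Φ n f g := by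
  rw [← zero_sub, omul_sub_left, omul_zero_left, zero_sub]

theorem Lt_eq_omul_odel_add_odel_omul [CharP Φ 3] (f g h : Fin (3 ^ n) → Φ) :
    Lt Φ n f g h = omul Φ n (omul Φ n f g) (odel Φ n h) + omul Φ n (odel Φ n (omul Φ n f g)) h
      + omul Φ n (omul Φ n g (odel Φ n f) - omul Φ n f (odel Φ n g)) h := by
  set X := omul Φ n (omul Φ n g (odel Φ n f)) h
  have hX₁ : omul Φ n (omul Φ n (odel Φ n f) g) h = X := by rw [omul_comm (odel Φ n f) g]
  have hX₂ : omul Φ n (omul Φ n h g) (odel Φ n f) = X := by rw [omul_assoc, omul_comm h]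
  have hX₃ : X + X + X = 0 := by
    funext k
    simp only [Pi.add_apply, Pi.zero_apply]
    linear_combination X k * CharP.cast_eq_zero Φ 3
  rw [Lt, odel_omul, omul_add_left, omul_sub_left, hX₁, hX₂]
  linear_combination -hX₃

end DividedPower

theorem frank_triple_bracket_general (Φ : Type*) [Field Φ] [CharP Φ 3] (n : ℕ)
    (f g h : Fin (3 ^ n) → Φ) :
    fbra Φ n (fbra Φ n (uT Φ n f) (vT Φ n g)) (uT Φ n h) =
      uT Φ n (omul Φ n (omul Φ n g f) (odel Φ n h) - omul Φ n (omul Φ n h g) (odel Φ n f)) ∧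
    fbra Φ n (fbra Φ n (uT Φ n f) (vT Φ n g)) (uT Φ n h) = uT Φ n (Lt Φ n f g h) ∧
    fbra Φ n (fbra Φ n (vT Φ n f) (uT Φ n g)) (vT Φ n h) = vT Φ n (-(Lt Φ n f g h)) := by
  have hu : fbra Φ n (fbra Φ n (uT Φ n f) (vT Φ n g)) (uT Φ n h) = uT Φ n (Lt Φ n f g h) := by
    simp [fbra, uT, vT, Lt_eq_omul_odel_add_odel_omul, odel_zero, omul_zero_left, omul_zero_right]
  have hv : fbra Φ n (fbra Φ n (vT Φ n f) (uT Φ n g)) (vT Φ n h) = vT Φ n (-(Lt Φ n f g h)) := by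
    simp only [fbra, vT, uT, omul_zero_left, odel_zero, omul_zero_right, sub_self, add_zero,
      zero_sub, neg_sub, smul_zero, odel_neg, omul_neg_left, sub_zero,
      Lt_eq_omul_odel_add_odel_omul, neg_add_rev, Frank.mk.injEq, and_self, and_true, true_and]
    abel
  exact ⟨by rw [hu, omul_comm g f, Lt], hu, hv⟩

/-- In the Frank algebra `F(n)`, the triple brackets recover the J-ternary triple
product: `[[u⊗f, v⊗g], u⊗h] = u ⊗ (g·f·∂(h) − h·g·∂(f)) = u ⊗ L_{f,g}h` and
`[[v⊗f, u⊗g], v⊗h] = −v ⊗ L_{f,g}h`. -/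
theorem frank_triple_bracket (Φ : Type*) [Field Φ] [CharP Φ 3] (n : ℕ) (hn : 1 ≤ n)
    (f g h : Fin (3 ^ n) → Φ) :
    fbra Φ n (fbra Φ n (uT Φ n f) (vT Φ n g)) (uT Φ n h) =
      uT Φ n (omul Φ n (omul Φ n g f) (odel Φ n h) - omul Φ n (omul Φ n h g) (odel Φ n f)) ∧
    fbra Φ n (fbra Φ n (uT Φ n f) (vT Φ n g)) (uT Φ n h) = uT Φ n (Lt Φ n f g h) ∧
    fbra Φ n (fbra Φ n (vT Φ n f) (uT Φ n g)) (vT Φ n h) = vT Φ n (-(Lt Φ n f g h)) :=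
  frank_triple_bracket_general Φ n f g h
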